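/- arXiv:2205.09684 — 7 statements merged into one kernel-verified Lean document; each statement's English description precedes it below -/
import Mathlib

section
/- Let m ≥ 2 be an integer, a_1, ..., a_k distinct integers, g(x) = (x-a_1)⋯(x-a_k), and define f(x) = (x(x^2+1)g(x))^{4m} + (x^{2m} - x^2 + 2)·g(x)^{2m} + x^m. Then for every integer x not in {0, a_1, ..., a_k}, f(x) is strictly between the consecutive m-th powers ((x(x^2+1)g(x))^4)^m and ((x(x^2+1)g(x))^4 + 1)^m; in particular f(x) is not the m-th power of any integer. -/
private lemma aux_low (U G X P : ℤ) (hP : 1 ≤ P) (hG1 : 1 ≤ G)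
    (hUX : X ^ 2 = U) (hPU2 : P ^ 2 ≤ U) : 0 < (U - P + 2) * G + X := by
  have hXabs : P ≤ |X| := by nlinarith [sq_abs X, abs_nonneg X]
  have hU1 : (1:ℤ) ≤ U := by nlinarith
  nlinarith [neg_abs_le X, sq_abs X,
    mul_le_mul_of_nonneg_left hG1 (by nlinarith : (0:ℤ) ≤ U - P + 2)]

private lemma aux_b21 (x g b : ℤ) (hP : (1:ℤ) ≤ x ^ 2) (hQ : (1:ℤ) ≤ g ^ 2)
    (hb2 : b ^ 2 = x ^ 2 * (x ^ 2 + 1) ^ 2 * g ^ 2) : (1:ℤ) ≤ b ^ 2 := by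
  rw [hb2]
  nlinarith [mul_le_mul_of_nonneg_left hQ (by nlinarith : (0:ℤ) ≤ x ^ 2 * (x ^ 2 + 1) ^ 2)]

private lemma aux_mid (U G X P V : ℤ) (hP : 1 ≤ P) (hU1 : 1 ≤ U) (hG1 : 1 ≤ G)
    (hXU : X ≤ U) (hV : 16 * (U * G) ≤ V) : (U - P + 2) * G + X < V := by
  have hUG : (1:ℤ) ≤ U * G := by nlinarith
  have hCG : (U - P + 2) * G ≤ 2 * (U * G) := by nlinarith
  have hXUG : X ≤ U * G := by nlinarith
  linarith

private lemma aux_16 (U G R W : ℤ) (hU1 : 1 ≤ U) (hG1 : 1 ≤ G) (hR16 : 16 ≤ R)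
    (hW : W = U * R * G) : 16 * (U * G) ≤ W := by
  have hUG : (0:ℤ) ≤ U * G := by nlinarith
  nlinarith [mul_le_mul_of_nonneg_left hR16 hUG]

theorem stmt_3 (m : ℕ) (hm : 2 ≤ m) (k : ℕ) (a : Fin k → ℤ)
    (ha : Function.Injective a) (x : ℤ) (hx0 : x ≠ 0) (hxa : ∀ i, x ≠ a i)
    (g : ℤ) (hg : g = ∏ i, (x - a i))
    (f : ℤ) (hf : f = (x * (x ^ 2 + 1) * g) ^ (4 * m)
      + (x ^ (2 * m) - x ^ 2 + 2) * g ^ (2 * m) + x ^ m) :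
    ((x * (x ^ 2 + 1) * g) ^ 4) ^ m < f ∧
      f < ((x * (x ^ 2 + 1) * g) ^ 4 + 1) ^ m ∧
      ¬∃ y : ℤ, y ^ m = f := by
  have hgne : g ≠ 0 := by
    rw [hg]
    exact Finset.prod_ne_zero_iff.mpr fun i _ => sub_ne_zero.mpr (hxa i)
  clear hg ha hxa
  -- basic facts
  have hP : (1:ℤ) ≤ x ^ 2 := by nlinarith [Int.one_le_abs hx0, sq_abs x, abs_nonneg x]
  have hQ : (1:ℤ) ≤ g ^ 2 := by nlinarith [Int.one_le_abs hgne, sq_abs g, abs_nonneg g]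
  have hR : (4:ℤ) ≤ (x ^ 2 + 1) ^ 2 := by nlinarith
  obtain ⟨b, hb⟩ : ∃ b, x * (x ^ 2 + 1) * g = b := ⟨_, rfl⟩
  obtain ⟨U, hU⟩ : ∃ U, (x ^ 2) ^ m = U := ⟨_, rfl⟩
  obtain ⟨G, hG⟩ : ∃ G, (g ^ 2) ^ m = G := ⟨_, rfl⟩
  obtain ⟨X, hX⟩ : ∃ X, x ^ m = X := ⟨_, rfl⟩
  have hfw : f = (b ^ 4) ^ m + ((U - x ^ 2 + 2) * G + X) := by
    rw [hf, hb, hX, ← hU, ← hG, ← pow_mul, ← pow_mul, ← pow_mul]; ring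
  rw [hb]
  clear hf
  have hUX : X ^ 2 = U := by rw [← hX, ← hU, ← pow_mul, ← pow_mul, Nat.mul_comm]
  have hU1 : (1:ℤ) ≤ U := hU ▸ one_le_pow₀ hP
  have hG1 : (1:ℤ) ≤ G := hG ▸ one_le_pow₀ hQ
  have hPU2 : (x ^ 2) ^ 2 ≤ U := hU ▸ pow_le_pow_right₀ hP (by omega)
  have hXU : X ≤ U := by nlinarith [le_abs_self X, sq_abs X, abs_nonneg X]
  -- lower bound
  have hlow : (b ^ 4) ^ m < f := by
    rw [hfw]
    have h1 := aux_low U G X (x ^ 2) hP hG1 hUX hPU2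
    linarith
  -- the margin term
  have hV : 16 * (U * G) ≤ b ^ (4 * (m - 1)) := by
    have e1 : b ^ (4 * (m - 1)) = (b ^ 2) ^ (2 * (m - 1)) := by
      rw [← pow_mul]; congr 1; omega
    have hb2 : b ^ 2 = x ^ 2 * (x ^ 2 + 1) ^ 2 * g ^ 2 := by rw [← hb]; ring
    have hb21 : (1:ℤ) ≤ b ^ 2 := aux_b21 x g b hP hQ hb2
    have e2 : (b ^ 2) ^ m ≤ (b ^ 2) ^ (2 * (m - 1)) := pow_le_pow_right₀ hb21 (by omega)
    have e3 : (b ^ 2) ^ m = U * ((x ^ 2 + 1) ^ 2) ^ m * G := by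
      rw [hb2, mul_pow, mul_pow, hU, hG]
    have hR16 : (16:ℤ) ≤ ((x ^ 2 + 1) ^ 2) ^ m := by
      calc (16:ℤ) = 4 ^ 2 := by norm_num
        _ ≤ 4 ^ m := pow_le_pow_right₀ (by norm_num) (by omega)
        _ ≤ ((x ^ 2 + 1) ^ 2) ^ m := pow_le_pow_left₀ (by norm_num) hR m
    calc 16 * (U * G) ≤ U * ((x ^ 2 + 1) ^ 2) ^ m * G :=
          aux_16 U G _ _ hU1 hG1 hR16 rfl
      _ = (b ^ 2) ^ m := e3.symm
      _ ≤ (b ^ 2) ^ (2 * (m - 1)) := e2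
      _ = b ^ (4 * (m - 1)) := e1.symm
  have hmid : (U - x ^ 2 + 2) * G + X < b ^ (4 * (m - 1)) :=
    aux_mid U G X (x ^ 2) _ hP hU1 hG1 hXU hV
  -- upper bound
  have hup : f < (b ^ 4 + 1) ^ m := by
    have hb4 : (0:ℤ) ≤ b ^ 4 := by positivity
    have e1 : (b ^ 4 + 1) ^ m = (b ^ 4 + 1) ^ (m - 1) * (b ^ 4 + 1) := by
      rw [← pow_succ]; congr 1; omega
    have e2 : (b ^ 4) ^ (m - 1) ≤ (b ^ 4 + 1) ^ (m - 1) := pow_le_pow_left₀ hb4 (by linarith) _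
    have e3 : (b ^ 4) ^ m + b ^ (4 * (m - 1)) ≤ (b ^ 4 + 1) ^ m := by
      have h5 : (b ^ 4) ^ (m - 1) * (b ^ 4 + 1) ≤ (b ^ 4 + 1) ^ (m - 1) * (b ^ 4 + 1) :=
        mul_le_mul_of_nonneg_right e2 (by linarith)
      have e4 : (b ^ 4) ^ (m - 1) * (b ^ 4 + 1) = (b ^ 4) ^ m + b ^ (4 * (m - 1)) := by
        have hm1 : m - 1 + 1 = m := by omega
        calc (b ^ 4) ^ (m - 1) * (b ^ 4 + 1)
            = (b ^ 4) ^ (m - 1 + 1) + (b ^ 4) ^ (m - 1) := by ring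
          _ = (b ^ 4) ^ m + b ^ (4 * (m - 1)) := by rw [hm1, ← pow_mul, ← pow_mul]
      rw [e1]; linarith [e4 ▸ h5]
    rw [hfw]; linarith
  refine ⟨hlow, hup, ?_⟩
  rintro ⟨y, hy⟩
  have hf0 : 0 < f := lt_of_le_of_lt (by positivity) hlow
  have habs : |y| ^ m = f := by
    rw [← abs_pow, hy, abs_of_pos hf0]
  have h1 : b ^ 4 < |y| := by
    by_contra h
    push_neg at h
    have := pow_le_pow_left₀ (abs_nonneg y) h m
    rw [habs] at this
    linarith
  have h2 : (b ^ 4 + 1) ^ m ≤ |y| ^ m := pow_le_pow_left₀ (by positivity) (by omega) m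
  rw [habs] at h2
  linarith
end

section
/- If integers x_1, x_2, x_3 satisfy 3x_1^4 + x_2^4 = x_3^4, then x_1 = 0. -/
/-!
Infinite descent on `|c|` for `3a⁴ + b⁴ = c⁴` with `a ≠ 0`. A prime dividing `b` and `c`
divides `a`, so we may assume `b` and `c` coprime; they are then odd, and writing `c = p + q`,
`b = p - q` turns the equation into `8pq(p² + q²) = 3a⁴` with `p`, `q`, `p² + q²` pairwise
coprime. Hence `p² + q² = r⁴` and `pq = 6w⁴`. Parametrising the primitive Pythagorean triple
`(p, q, r²)` by `K > L > 0` gives `KL(K - L)(K + L) = 3w⁴` with pairwise coprime factors, and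
since fourth powers are `0` or `1` mod 16 the only possibility is `K = x⁴`, `L = 3y⁴`,
`K + L = v⁴`. Then `3y⁴ + x⁴ = v⁴` is a new solution with `v⁴ ≤ K² + L² = r² < p + q = c`.
-/

namespace Int

theorem pow_four_emod_sixteen_of_even {x : ℤ} (hx : Even x) : x ^ 4 % 16 = 0 := by
  obtain ⟨k, rfl⟩ := hx
  rw [show (k + k) ^ 4 = 16 * k ^ 4 by ring]
  exact Int.mul_emod_right 16 _

theorem pow_four_emod_sixteen_of_odd {x : ℤ} (hx : Odd x) : x ^ 4 % 16 = 1 := by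
  obtain ⟨k, rfl⟩ := hx
  obtain ⟨j, hj⟩ := Int.even_mul_succ_self k
  have : (2 * k + 1) ^ 4 = 16 * (k ^ 4 + 2 * k ^ 3 + k ^ 2 + j) + 1 := by
    linear_combination 8 * hj
  omega

theorem pow_four_emod_sixteen (x : ℤ) : x ^ 4 % 16 = 0 ∨ x ^ 4 % 16 = 1 :=
  (Int.even_or_odd x).imp pow_four_emod_sixteen_of_even pow_four_emod_sixteen_of_odd

theorem three_dvd_of_three_dvd_sq_add_sq {x y : ℤ} (h : 3 ∣ x ^ 2 + y ^ 2) :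
    3 ∣ x ∧ 3 ∣ y := by
  have key : ∀ u v : ZMod 3, u ^ 2 + v ^ 2 = 0 → u = 0 ∧ v = 0 := by decide
  have hdvd (z : ℤ) : 3 ∣ z ↔ (z : ZMod 3) = 0 := (ZMod.intCast_zmod_eq_zero_iff_dvd z 3).symm
  simp only [hdvd, Int.cast_add, Int.cast_pow] at h ⊢
  exact key _ _ h

theorem eq_pow_of_mul_eq_pow_of_nonneg_left {a b c : ℤ} {k : ℕ} (ha : 0 ≤ a)
    (hab : IsCoprime a b) (h : a * b = c ^ k) : ∃ d, a = d ^ k := by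
  obtain ⟨d, hd⟩ := exists_associated_pow_of_mul_eq_pow' hab h
  rcases natAbs_eq_natAbs_iff.mp (associated_iff_natAbs.mp hd) with hd | hd
  · exact ⟨d, hd.symm⟩
  rcases Nat.even_or_odd k with hk | hk
  · exact ⟨d, by linarith [hk.pow_nonneg d]⟩
  · exact ⟨-d, by rw [hk.neg_pow, hd, neg_neg]⟩

theorem eq_prime_mul_pow_of_mul_eq_prime_mul_pow_of_dvd {a b c p : ℤ} {k : ℕ} (ha : 0 ≤ a)
    (hb : 0 ≤ b) (hp : 0 < p) (hab : IsCoprime a b) (h : a * b = p * c ^ k) (hpa : p ∣ a) :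
    ∃ r s, a = p * r ^ k ∧ b = s ^ k := by
  obtain ⟨a', rfl⟩ := hpa
  have ha' : 0 ≤ a' := (mul_nonneg_iff_of_pos_left hp).mp ha
  have h' : a' * b = c ^ k := by
    apply mul_left_cancel₀ hp.ne'
    linear_combination h
  have hab' : IsCoprime a' b := hab.of_mul_left_right
  obtain ⟨r, rfl⟩ := eq_pow_of_mul_eq_pow_of_nonneg_left ha' hab' h'
  obtain ⟨s, rfl⟩ := eq_pow_of_mul_eq_pow_of_nonneg_left hb hab'.symm ((mul_comm _ _).trans h')
  exact ⟨r, s, rfl, rfl⟩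

theorem exists_pow_of_mul_eq_prime_mul_pow {a b c p : ℤ} {k : ℕ} (ha : 0 ≤ a) (hb : 0 ≤ b)
    (hp : Prime p) (hp0 : 0 < p) (hab : IsCoprime a b) (h : a * b = p * c ^ k) :
    (∃ r s, a = p * r ^ k ∧ b = s ^ k) ∨ (∃ r s, a = r ^ k ∧ b = p * s ^ k) := by
  rcases hp.dvd_or_dvd ⟨_, h⟩ with hpa | hpb
  · exact .inl (eq_prime_mul_pow_of_mul_eq_prime_mul_pow_of_dvd ha hb hp0 hab h hpa)
  · obtain ⟨s, r, hb', ha'⟩ := eq_prime_mul_pow_of_mul_eq_prime_mul_pow_of_dvd hb ha hp0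
      hab.symm ((mul_comm _ _).trans h) hpb
    exact .inr ⟨r, s, ha', hb'⟩

theorem dvd_of_pow_dvd_mul_pow {p k a : ℤ} {n : ℕ} (hp : Prime p) (hk : ¬ p ^ n ∣ k)
    (h : p ^ n ∣ k * a ^ n) : p ∣ a := by
  by_contra hpa
  have : IsCoprime (p ^ n) (a ^ n) := ((hp.coprime_iff_not_dvd).mpr hpa).pow
  exact hk (this.dvd_of_dvd_mul_right h)

end Int

theorem odd_of_isCoprime_of_three_mul_pow_four_add_pow_four_eq {a b c : ℤ} (hbc : IsCoprime b c)
    (h : 3 * a ^ 4 + b ^ 4 = c ^ 4) : Odd b ∧ Odd c := by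
  have := Int.pow_four_emod_sixteen a
  rcases Int.even_or_odd b with hb | hb <;> rcases Int.even_or_odd c with hc | hc
  · exact absurd (hbc.isUnit_of_dvd' hb.two_dvd hc.two_dvd) Int.prime_two.not_isUnit
  · have := Int.pow_four_emod_sixteen_of_even hb
    have := Int.pow_four_emod_sixteen_of_odd hc
    omega
  · have := Int.pow_four_emod_sixteen_of_odd hb
    have := Int.pow_four_emod_sixteen_of_even hc
    omega
  · exact ⟨hb, hc⟩

theorem exists_sq_add_sq_eq_pow_four {p q a : ℤ} (hp : 0 < p) (hq : 0 < q) (hpq : IsCoprime p q)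
    (hodd : Odd (p + q)) (h : (p ^ 2 + q ^ 2) * (8 * p * q) = 3 * a ^ 4) :
    ∃ r w, p ^ 2 + q ^ 2 = r ^ 4 ∧ p * q = 6 * w ^ 4 := by
  have hmp : IsCoprime (p ^ 2 + q ^ 2) p := by
    rw [show p ^ 2 + q ^ 2 = q ^ 2 + p * p by ring]
    exact hpq.symm.pow_left.add_mul_right_left p
  have hmq : IsCoprime (p ^ 2 + q ^ 2) q := by
    rw [show p ^ 2 + q ^ 2 = p ^ 2 + q * q by ring]
    exact hpq.pow_left.add_mul_right_left q
  have hm8 : IsCoprime (p ^ 2 + q ^ 2) 8 := by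
    have hm_odd : Odd (p ^ 2 + q ^ 2) := by
      rw [show p ^ 2 + q ^ 2 = (p + q) ^ 2 - 2 * (p * q) by ring]
      exact hodd.pow.sub_even (even_two_mul _)
    simpa using (Int.isCoprime_two_right.mpr hm_odd).pow_right (n := 3)
  rcases Int.exists_pow_of_mul_eq_prime_mul_pow (by positivity) (by positivity)
      Int.prime_three three_pos ((hm8.mul_right hmp).mul_right hmq) h with
    ⟨r, s, hr, -⟩ | ⟨r, s, hr, hs⟩
  · obtain ⟨h3p, h3q⟩ := Int.three_dvd_of_three_dvd_sq_add_sq ⟨_, hr⟩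
    exact absurd (hpq.isUnit_of_dvd' h3p h3q) Int.prime_three.not_isUnit
  · obtain ⟨w, rfl⟩ : Even s := by
      refine Int.not_odd_iff_even.mp fun hs_odd => ?_
      have := Int.pow_four_emod_sixteen_of_odd hs_odd
      rw [mul_assoc] at hs
      omega
    exact ⟨r, w, hr, mul_left_cancel₀ (by norm_num : (8 : ℤ) ≠ 0) (by linear_combination hs)⟩

theorem exists_coprime_of_sq_add_sq_eq_pow_four {p q r w : ℤ} (hp : 0 < p) (hq : 0 < q)
    (hpq : IsCoprime p q) (hodd : Odd (p + q)) (hr : p ^ 2 + q ^ 2 = r ^ 4)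
    (hw : p * q = 6 * w ^ 4) :
    ∃ K L, 0 < L ∧ L < K ∧ IsCoprime K L ∧ Odd (K + L) ∧ K ^ 2 + L ^ 2 = r ^ 2 ∧
      K * L * ((K - L) * (K + L)) = 3 * w ^ 4 := by
  wlog hpo : Odd p generalizing p q
  · have hqo : Odd q := by
      rw [Int.odd_iff] at hodd hpo ⊢
      omega
    exact this hq hp hpq.symm (by rwa [add_comm]) (by linear_combination hr)
      (by linear_combination hw) hqo
  have hr0 : 0 < r ^ 2 := by
    rcases (sq_nonneg r).lt_or_eq with h0 | h0
    · exact h0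
    · nlinarith
  obtain ⟨K, L, rfl, rfl, hKL, hgcd, hpar, hK0⟩ := PythagoreanTriple.coprime_classification'
    (by linear_combination hr : p * p + q * q = r ^ 2 * r ^ 2)
    (Int.isCoprime_iff_gcd_eq_one.mp hpq) (Int.odd_iff.mp hpo) hr0
  have hK : 0 < K := by nlinarith
  have hL : 0 < L := by nlinarith
  refine ⟨K, L, hL, by nlinarith, Int.isCoprime_iff_gcd_eq_one.mpr hgcd,
    Int.odd_iff.mpr (by omega), hKL.symm,
    mul_left_cancel₀ two_ne_zero (by linear_combination hw)⟩

theorem exists_pow_four_of_mul_mul_sub_mul_add {K L w : ℤ} (hL : 0 < L) (hLK : L < K)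
    (hKL : IsCoprime K L) (hodd : Odd (K + L)) (h : K * L * ((K - L) * (K + L)) = 3 * w ^ 4) :
    ∃ x y v, K = x ^ 4 ∧ L = 3 * y ^ 4 ∧ K + L = v ^ 4 := by
  obtain ⟨m, n, hmn⟩ := id hKL
  obtain ⟨j, hj⟩ := hodd
  have hcop : IsCoprime (K * L) ((K - L) * (K + L)) := by
    refine IsCoprime.mul_left (.mul_right ?_ ?_) (.mul_right ?_ ?_)
    · exact ⟨m + n, -n, by linear_combination hmn⟩
    · exact ⟨m - n, n, by linear_combination hmn⟩
    · exact ⟨m + n, m, by linear_combination hmn⟩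
    · exact ⟨n - m, m, by linear_combination hmn⟩
  have hcop' : IsCoprime (K - L) (K + L) :=
    ⟨-(j * (m - n)), 1 - j * (m + n), by linear_combination (-2 * j) * hmn + hj⟩
  have hK : 0 < K := hL.trans hLK
  rcases Int.exists_pow_of_mul_eq_prime_mul_pow (by positivity) (by nlinarith) Int.prime_three
      three_pos hcop h with ⟨t, s, hKL3, hdiff4⟩ | ⟨t, s, hKL4, hdiff3⟩
  · obtain ⟨r, hr⟩ := Int.eq_pow_of_mul_eq_pow_of_nonneg_left (by omega) hcop' hdiff4
    obtain ⟨v, hv⟩ := Int.eq_pow_of_mul_eq_pow_of_nonneg_left (by omega) hcop'.symm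
      ((mul_comm _ _).trans hdiff4)
    rcases Int.exists_pow_of_mul_eq_prime_mul_pow hK.le hL.le Int.prime_three three_pos
      hKL hKL3 with ⟨x, y, hx, hy⟩ | ⟨x, y, hx, hy⟩
    · have := Int.pow_four_emod_sixteen x
      have := Int.pow_four_emod_sixteen r
      have := Int.pow_four_emod_sixteen v
      omega
    · exact ⟨x, y, v, hx, hy, hv⟩
  · exfalso
    obtain ⟨x, hx⟩ := Int.eq_pow_of_mul_eq_pow_of_nonneg_left hK.le hKL hKL4
    rcases Int.exists_pow_of_mul_eq_prime_mul_pow (by omega) (by omega) Int.prime_three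
      three_pos hcop' hdiff3 with ⟨r, v, hr, hv⟩ | ⟨r, v, hr, hv⟩ <;>
    · have := Int.pow_four_emod_sixteen x
      have := Int.pow_four_emod_sixteen r
      have := Int.pow_four_emod_sixteen v
      omega

theorem exists_smaller_solution_of_not_isCoprime {a b c : ℤ} (ha : a ≠ 0)
    (hbc : ¬IsCoprime b c) (h : 3 * a ^ 4 + b ^ 4 = c ^ 4) :
    ∃ a' b' c' : ℤ, a' ≠ 0 ∧ 3 * a' ^ 4 + b' ^ 4 = c' ^ 4 ∧ c'.natAbs < c.natAbs := by
  obtain ⟨p, hp, hpg⟩ := Int.exists_prime_and_dvd (n := Int.gcd b c)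
    (by rwa [Int.natAbs_natCast, Ne, ← Int.isCoprime_iff_gcd_eq_one])
  obtain ⟨b', rfl⟩ := hpg.trans (Int.gcd_dvd_left b c)
  obtain ⟨c', rfl⟩ := hpg.trans (Int.gcd_dvd_right _ c)
  have hp2 : 2 ≤ p.natAbs := (Int.prime_iff_natAbs_prime.mp hp).two_le
  have hp4 : ¬p ^ 4 ∣ 3 := fun hdvd => by
    have := Nat.le_of_dvd three_pos (Int.natAbs_dvd_natAbs.mpr hdvd)
    rw [Int.natAbs_pow] at this
    have := Nat.pow_le_pow_left hp2 4
    omega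
  obtain ⟨a', rfl⟩ : p ∣ a :=
    Int.dvd_of_pow_dvd_mul_pow hp hp4 ⟨c' ^ 4 - b' ^ 4, by linear_combination h⟩
  have h' : 3 * a' ^ 4 + b' ^ 4 = c' ^ 4 :=
    mul_left_cancel₀ (pow_ne_zero 4 hp.ne_zero) (by linear_combination h)
  have ha' : a' ≠ 0 := right_ne_zero_of_mul ha
  have hc' : c' ≠ 0 := by
    rintro rfl
    have : 0 < 3 * a' ^ 4 + b' ^ 4 := by positivity
    simp_all
  refine ⟨a', b', c', ha', h', ?_⟩
  rw [Int.natAbs_mul]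
  have := Int.natAbs_pos.mpr hc'
  nlinarith

theorem exists_smaller_solution_of_isCoprime {a b c : ℤ} (ha : a ≠ 0) (hb : 0 ≤ b) (hc : 0 ≤ c)
    (hbc : IsCoprime b c) (h : 3 * a ^ 4 + b ^ 4 = c ^ 4) :
    ∃ a' b' c' : ℤ, a' ≠ 0 ∧ 3 * a' ^ 4 + b' ^ 4 = c' ^ 4 ∧ c'.natAbs < c.natAbs := by
  obtain ⟨hbo, hco⟩ := odd_of_isCoprime_of_three_mul_pow_four_add_pow_four_eq hbc h
  obtain ⟨p, hp⟩ := hco.add_odd hbo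
  obtain ⟨q, hq⟩ := hco.sub_odd hbo
  obtain rfl : c = p + q := by omega
  obtain rfl : b = p - q := by omega
  have hq0 : 0 < q := by
    suffices p - q < p + q by omega
    refine lt_of_pow_lt_pow_left₀ 4 hc ?_
    have := pow_pos (sq_pos_of_ne_zero ha) 2
    nlinarith
  have hpq : IsCoprime p q := by
    obtain ⟨u, v, huv⟩ := hbc
    exact ⟨u + v, v - u, by linear_combination huv⟩
  obtain ⟨r, w, hr, hw⟩ := exists_sq_add_sq_eq_pow_four (a := a) (by omega) hq0 hpq hco
    (by linear_combination -h)
  obtain ⟨K, L, hL, hLK, hKL, hodd, hKLr, hprod⟩ :=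
    exists_coprime_of_sq_add_sq_eq_pow_four (by omega) hq0 hpq hco hr hw
  obtain ⟨x, y, v, hx, hy, hv⟩ := exists_pow_four_of_mul_mul_sub_mul_add hL hLK hKL hodd hprod
  refine ⟨y, x, v, fun hy0 => by simp [hy0] at hy; omega,
    by linear_combination hv - hx - hy, ?_⟩
  have hv_le : (v.natAbs : ℤ) ≤ v ^ 4 := by
    have := Int.le_self_sq (v ^ 2)
    have := Int.natAbs_le_self_sq v
    linarith [show (v ^ 2) ^ 2 = v ^ 4 by ring]
  have hKL_le : K + L ≤ r ^ 2 := by nlinarith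
  have hr_lt : r ^ 2 < p + q := by nlinarith
  omega

theorem exists_smaller_solution {a b c : ℤ} (ha : a ≠ 0) (h : 3 * a ^ 4 + b ^ 4 = c ^ 4) :
    ∃ a' b' c' : ℤ, a' ≠ 0 ∧ 3 * a' ^ 4 + b' ^ 4 = c' ^ 4 ∧ c'.natAbs < c.natAbs := by
  rw [← Int.natAbs_abs c]
  rw [← (by decide : Even 4).pow_abs b, ← (by decide : Even 4).pow_abs c] at h
  by_cases hbc : IsCoprime |b| |c|
  · exact exists_smaller_solution_of_isCoprime ha (abs_nonneg b) (abs_nonneg c) hbc h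
  · exact exists_smaller_solution_of_not_isCoprime ha hbc h

theorem stmt_6 (x₁ x₂ x₃ : ℤ) (h : 3 * x₁ ^ 4 + x₂ ^ 4 = x₃ ^ 4) : x₁ = 0 := by
  induction hn : x₃.natAbs using Nat.strong_induction_on generalizing x₁ x₂ x₃ with
  | _ n ih =>
    by_contra hx₁
    obtain ⟨a, b, c, ha, habc, hlt⟩ := exists_smaller_solution hx₁ h
    exact ha (ih _ (hn ▸ hlt) a b c habc rfl)
end

section
/- If integers z, c, n with n ≥ 2 satisfy z^n - c^4 = 1 and z^n > 0, then c = 0 and z^n = 1. -/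
/-!
Put `y = c ^ 2`; it suffices that `y ^ 2 + 1 = z ^ n` forces `y = 0` (Lebesgue). For even `n`
this says that `y ^ 2 + 1` is a square only for `y = 0`. For odd `n`, `y` is even (look mod 4),
so `1 + y i` and `1 - y i` are coprime in `ℤ[i]`; since `n` is odd and the units of `ℤ[i]` have
order dividing 4, `1 + y i = w ^ n`. As `w + w̄ ∣ w ^ n + w̄ ^ n = 2`, `Re w = ±1`, so up to
sign `w = 1 + b i` with `b` even and `Re ((1 + b i) ^ n) = ±1`. Expanding binomially, every
term beyond the quadratic one is divisible by `2 ^ (v + 1) b ^ 2`, where `2 ^ v` is the exact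
power of 2 dividing `C(n, 2)`; hence `Re ((1 + b i) ^ n) ≡ 1 - C(n, 2) b ^ 2`, which is `±1`
only if `b = 0`.
-/

local notation "ℤ[i]" => GaussianInt

open Zsqrtd

namespace Nat

lemma le_sub_two_of_two_pow_dvd_mul_pred {k s : ℕ} (hk : 3 ≤ k) (h : 2 ^ s ∣ k * (k - 1)) :
    s ≤ k - 2 := by
  have hle : 2 ^ s ≤ k := by
    rcases Nat.even_or_odd k with hev | hodd
    · have hpred : Odd (k - 1) := Nat.Even.sub_odd (by omega) hev odd_one
      exact Nat.le_of_dvd (by omega)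
        ((Coprime.pow_left s hpred.coprime_two_left).dvd_of_dvd_mul_right h)
    · exact (Nat.le_of_dvd (by omega)
        ((Coprime.pow_left s hodd.coprime_two_left).dvd_of_dvd_mul_left h)).trans (by omega)
  by_contra! hs
  have : 2 ^ (k - 1) ≤ 2 ^ s := Nat.pow_le_pow_right two_pos (by omega)
  have : 2 ^ (k - 1) = 2 * 2 ^ (k - 2) := by rw [← pow_succ']; congr 1; omega
  have : k - 2 < 2 ^ (k - 2) := Nat.lt_two_pow_self
  omega

lemma two_pow_dvd_choose_mul_two_pow (n : ℕ) {k : ℕ} (hk : 3 ≤ k) :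
    2 ^ (padicValNat 2 (n.choose 2) + 1) ∣ n.choose k * 2 ^ (k - 2) := by
  have hmul : 2 ^ (padicValNat 2 (n.choose 2) + 1) ∣ n.choose k * (k * (k - 1)) := by
    have hk2 : k * (k - 1) = k.choose 2 * 2 := by
      rw [choose_two_right, Nat.div_mul_cancel (even_mul_pred_self k).two_dvd]
    rw [hk2, ← mul_assoc, pow_succ]
    exact mul_dvd_mul_right (pow_padicValNat_dvd.trans ⟨_, choose_mul (by omega)⟩) 2
  obtain ⟨s, t, ht, hst⟩ :=
    exists_eq_two_pow_mul_odd (n := k * (k - 1)) (Nat.mul_ne_zero (by omega) (by omega))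
  have hs : s ≤ k - 2 := le_sub_two_of_two_pow_dvd_mul_pred hk (hst ▸ dvd_mul_right _ _)
  rw [hst, ← mul_assoc] at hmul
  exact ((Coprime.pow_left _ ht.coprime_two_left).dvd_of_dvd_mul_right hmul).trans
    (mul_dvd_mul_left _ (pow_dvd_pow 2 hs))

end Nat

namespace Int

lemma two_pow_mul_sq_dvd_choose_mul_pow (n : ℕ) {k : ℕ} (hk : 3 ≤ k) {c : ℤ} (hc : Even c) :
    2 ^ (padicValNat 2 (n.choose 2) + 1) * c ^ 2 ∣ n.choose k * c ^ k := by
  obtain ⟨t, rfl⟩ := hc.two_dvd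
  have hnat : (2 : ℤ) ^ (padicValNat 2 (n.choose 2) + 1) ∣ n.choose k * 2 ^ (k - 2) := by
    exact_mod_cast Nat.two_pow_dvd_choose_mul_two_pow n hk
  have hsplit : (n.choose k : ℤ) * (2 * t) ^ k
      = n.choose k * 2 ^ (k - 2) * (t ^ (k - 2) * (2 * t) ^ 2) := by
    rw [show k = k - 2 + 2 by omega, pow_add, mul_pow, Nat.add_sub_cancel]; ring
  rw [hsplit]
  exact mul_dvd_mul hnat (dvd_mul_left _ _)

end Int

lemma dvd_add_one_pow_sub_quadratic {R : Type*} [CommRing R] {d : R} (x : R) (n : ℕ)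
    (h : ∀ k, 3 ≤ k → d ∣ x ^ k * n.choose k) :
    d ∣ (x + 1) ^ n - (1 + n * x + n.choose 2 * x ^ 2) := by
  have hsum : (x + 1) ^ n = ∑ k ∈ Finset.range (3 + n), x ^ k * n.choose k := by
    rw [add_pow, add_comm 3, Finset.sum_range_succ _ (n + 2), Finset.sum_range_succ _ (n + 1),
      Nat.choose_eq_zero_of_lt (by omega : n < n + 2),
      Nat.choose_eq_zero_of_lt (by omega : n < n + 1)]
    simp
  have hlow : ∑ k ∈ Finset.range 3, x ^ k * n.choose k = 1 + n * x + n.choose 2 * x ^ 2 := by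
    simp only [Finset.sum_range_succ, Finset.sum_range_zero, pow_zero, Nat.choose_zero_right,
      Nat.cast_one, pow_one, Nat.choose_one_right]
    ring
  rw [hsum, Finset.sum_range_add, hlow, add_sub_cancel_left]
  exact Finset.dvd_sum fun k _ => h _ (by omega)

lemma Zsqrtd.re_dvd_re_pow {d : ℤ} (w : ℤ√d) {n : ℕ} (hn : Odd n) :
    w.re ∣ (w ^ n).re := by
  have hre : ∀ v : ℤ√d, v + star v = ((2 * v.re : ℤ) : ℤ√d) := fun v => by
    ext <;> simp [two_mul]
  have h := hn.add_dvd_pow_add_pow w (star w)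
  rw [← star_pow, hre, hre, intCast_dvd_intCast] at h
  exact (mul_dvd_mul_iff_left two_ne_zero).mp h

namespace GaussianInt

lemma eq_zero_of_isUnit_re_pow {c : ℤ} (hc : Even c) {n : ℕ} (hn : 2 ≤ n)
    (hu : IsUnit ((⟨1, c⟩ : ℤ[i]) ^ n).re) : c = 0 := by
  by_contra hc0
  set e := padicValNat 2 (n.choose 2) + 1
  have hterm (k : ℕ) (hk : 3 ≤ k) :
      ((2 ^ e * c ^ 2 : ℤ) : ℤ[i]) ∣ (⟨0, c⟩ : ℤ[i]) ^ k * (n.choose k : ℤ[i]) := by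
    have : (⟨0, c⟩ : ℤ[i]) ^ k * (n.choose k : ℤ[i])
        = (((n.choose k : ℤ) * c ^ k : ℤ) : ℤ[i]) * sqrtd ^ k := by
      rw [show (⟨0, c⟩ : ℤ[i]) = (c : ℤ[i]) * sqrtd by ext <;> simp]; push_cast; ring
    rw [this]
    exact (Int.cast_dvd_cast _ _ (Int.two_pow_mul_sq_dvd_choose_mul_pow n hk hc)).mul_right _
  have hcong : 2 ^ e * c ^ 2 ∣ ((⟨1, c⟩ : ℤ[i]) ^ n).re - (1 - n.choose 2 * c ^ 2) := by
    have key := dvd_add_one_pow_sub_quadratic _ n hterm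
    rw [show (⟨0, c⟩ + 1 : ℤ[i]) = ⟨1, c⟩ by ext <;> simp, intCast_dvd] at key
    simpa [pow_two, sub_eq_add_neg] using key.1
  rcases Int.isUnit_iff.mp hu with h | h <;> rw [h] at hcong
  · have : (2 : ℤ) ^ e ∣ n.choose 2 := by
      rw [sub_sub_cancel, mul_comm (2 ^ e)] at hcong
      exact (mul_dvd_mul_iff_left (pow_ne_zero 2 hc0)).mp (by simpa [mul_comm] using hcong)
    exact pow_succ_padicValNat_not_dvd (Nat.choose_pos hn).ne' (by exact_mod_cast this)
  · have hdvd : c ^ 2 ∣ 2 := by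
      have := (dvd_mul_left (c ^ 2) (2 ^ e)).trans hcong
      rw [show (-1 : ℤ) - (1 - n.choose 2 * c ^ 2) = -2 + n.choose 2 * c ^ 2 by ring] at this
      exact dvd_neg.mp ((dvd_add_left (dvd_mul_left _ _)).mp this)
    obtain ⟨t, rfl⟩ := hc.two_dvd
    have := Int.le_of_dvd two_pos hdvd
    have : t ≠ 0 := by rintro rfl; simp at hc0
    nlinarith [sq_pos_of_ne_zero this]

lemma pow_four_eq_one_of_isUnit {u : ℤ[i]} (hu : IsUnit u) : u ^ 4 = 1 := by
  have hnorm := (norm_eq_one_iff' (by norm_num) u).mpr hu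
  obtain ⟨a, b⟩ := u
  simp only [norm_def] at hnorm
  have hab : a * b = 0 := by
    by_contra h
    obtain ⟨ha, hb⟩ := mul_ne_zero_iff.mp h
    nlinarith [mul_self_pos.mpr ha, mul_self_pos.mpr hb]
  ext <;> simp only [pow_succ, pow_zero, one_mul, re_mul, im_mul, re_one, im_one]
  · linear_combination (a * a + b * b + 1) * hnorm - 8 * a * b * hab
  · linear_combination 4 * (a * a - b * b) * hab

lemma exists_pow_eq_of_associated {n : ℕ} (hn : Odd n) {a b : ℤ[i]}
    (h : Associated (a ^ n) b) : ∃ c, c ^ n = b := by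
  obtain ⟨u, rfl⟩ := h
  obtain ⟨k, hk⟩ : ∃ k, n * n = 4 * k + 1 := by
    obtain ⟨m, rfl⟩ := hn; exact ⟨m * (m + 1), by ring⟩
  refine ⟨a * (u : ℤ[i]) ^ n, ?_⟩
  rw [mul_pow, ← pow_mul, hk, pow_succ, pow_mul, pow_four_eq_one_of_isUnit u.isUnit, one_pow,
    one_mul]

lemma isCoprime_mk_one_neg {x : ℤ} (hx : Even x) :
    IsCoprime (⟨1, x⟩ : ℤ[i]) ⟨1, -x⟩ := by
  refine EuclideanDomain.isCoprime_of_dvd (fun h => by simpa using congrArg re h.1)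
    fun g hg _ hg1 hg2 => hg ?_
  have h4 : IsCoprime (2 ^ 2 : ℤ) (1 + x ^ 2) := by
    obtain ⟨t, rfl⟩ := hx
    exact IsCoprime.pow_left ⟨-2 * t ^ 2, 1, by ring⟩
  rw [isUnit_iff_norm_isUnit]
  refine h4.isUnit_of_dvd' ?_ ?_
  · have hsum : (⟨1, x⟩ + ⟨1, -x⟩ : ℤ[i]) = 2 := by ext <;> simp
    have h : g.norm ∣ norm 2 := map_dvd normMonoidHom ((dvd_add hg1 hg2).trans hsum.dvd)
    simpa [norm_def] using h
  · have h : g.norm ∣ norm ⟨1, x⟩ := map_dvd normMonoidHom hg1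
    simpa [norm_def, pow_two, add_comm] using h

lemma exists_pow_eq_mk_one {x z : ℤ} {n : ℕ} (hodd : Odd n) (hx : Even x)
    (h : x ^ 2 + 1 = z ^ n) : ∃ w : ℤ[i], w ^ n = ⟨1, x⟩ := by
  have hprod : (⟨1, x⟩ : ℤ[i]) * ⟨1, -x⟩ = (z : ℤ[i]) ^ n := by
    rw [← Int.cast_pow, ← h]
    ext <;> simp only [re_mul, im_mul, re_intCast, im_intCast] <;> ring
  obtain ⟨w₀, hw₀⟩ := exists_associated_pow_of_mul_eq_pow' (isCoprime_mk_one_neg hx) hprod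
  exact exists_pow_eq_of_associated hodd hw₀

end GaussianInt

namespace Int

lemma eq_zero_of_sq_add_one_eq_sq {x y : ℤ} (h : x ^ 2 + 1 = y ^ 2) : x = 0 := by
  have := eq_one_or_neg_one_of_mul_eq_one' (u := y - x) (v := y + x) (by linear_combination -h)
  omega

lemma even_of_sq_add_one_eq_pow {x z : ℤ} {n : ℕ} (hn : 2 ≤ n) (h : x ^ 2 + 1 = z ^ n) :
    Even x := by
  by_contra hx
  obtain ⟨t, rfl⟩ := not_even_iff_odd.mp hx
  have hz : Even z := (even_pow' (by omega)).mp <|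
    h ▸ (⟨2 * t ^ 2 + 2 * t + 1, by ring⟩ : Even ((2 * t + 1) ^ 2 + 1))
  have h4 : (4 : ℤ) ∣ z ^ n := (pow_dvd_pow_of_dvd hz.two_dvd 2).trans (pow_dvd_pow z hn)
  rw [← h, show (2 * t + 1) ^ 2 + 1 = 4 * (t ^ 2 + t) + 2 by ring] at h4
  omega

lemma eq_zero_of_sq_add_one_eq_pow_of_odd {x z : ℤ} {n : ℕ} (hn : 2 ≤ n) (hodd : Odd n)
    (h : x ^ 2 + 1 = z ^ n) : x = 0 := by
  have hx := even_of_sq_add_one_eq_pow hn h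
  obtain ⟨w, hw⟩ := GaussianInt.exists_pow_eq_mk_one hodd hx h
  have ha : IsUnit w.re := isUnit_of_dvd_one (by simpa [hw] using w.re_dvd_re_pow hodd)
  have hre : w.re * w.re = 1 := isUnit_mul_self ha
  have hb : Even w.im := by
    have hnorm : w.norm ^ n = x * x + 1 := by
      have hpow : (w ^ n).norm = w.norm ^ n := map_pow normMonoidHom w n
      rw [← hpow, hw, norm_def]
      ring
    have : Odd (w.norm ^ n) := by
      rw [hnorm]; simpa [parity_simps] using hx
    rw [odd_pow' (by omega), norm_def] at this
    simpa [hre, parity_simps] using this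
  have hc : w.re * w.im = 0 := by
    refine GaussianInt.eq_zero_of_isUnit_re_pow (hb.mul_left _) hn ?_
    rw [show (⟨1, w.re * w.im⟩ : ℤ[i]) = w.re * w by ext <;> simp [hre], mul_pow, hw,
      ← Int.cast_pow, smul_val]
    simpa using ha.pow n
  have hb0 : w.im = 0 := by simpa [ha.ne_zero] using hc
  calc x = (w ^ n).im := by rw [hw]
    _ = 0 := by
      rw [show w = (w.re : ℤ[i]) by ext <;> simp [hb0], ← Int.cast_pow, im_intCast]

theorem eq_zero_of_sq_add_one_eq_pow {x z : ℤ} {n : ℕ} (hn : 2 ≤ n) (h : x ^ 2 + 1 = z ^ n) :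
    x = 0 := by
  rcases Nat.even_or_odd n with ⟨m, rfl⟩ | hodd
  · exact eq_zero_of_sq_add_one_eq_sq (y := z ^ m) (by rw [h]; ring)
  · exact eq_zero_of_sq_add_one_eq_pow_of_odd hn hodd h

end Int

theorem stmt_10_general (z c : ℤ) (n : ℕ) (hn : 2 ≤ n) (h : z ^ n - c ^ 4 = 1) :
    c = 0 ∧ z ^ n = 1 := by
  have hc2 : c ^ 2 = 0 := Int.eq_zero_of_sq_add_one_eq_pow (z := z) hn (by linear_combination -h)
  obtain rfl : c = 0 := pow_eq_zero_iff two_ne_zero |>.mp hc2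
  exact ⟨rfl, by linarith⟩

theorem stmt_10 (z c : ℤ) (n : ℕ) (hn : 2 ≤ n) (h : z ^ n - c ^ 4 = 1)
    (hpos : 0 < z ^ n) : c = 0 ∧ z ^ n = 1 :=
  stmt_10_general z c n hn h
end

section
/- Let b_1, ..., b_k be distinct perfect powers of integers (each b_i = a^m for some integer a and some m ≥ 2), let g(x) = ((x-b_1)⋯(x-b_k))^4 + 1 and f(x) = g(x)·((x-1)·g(x) + 1). Assuming the special case of Mihăilescu's theorem that z^n = c^4 + 1 with n ≥ 2 forces c = 0, we have: for every integer x, f(x) is a perfect power (i.e., f(x) = y^n for some integers y and n ≥ 2) if and only if x ∈ {b_1, ..., b_k}. -/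
theorem stmt_11
    (mihailescu : ∀ (z c : ℤ) (n : ℕ), 2 ≤ n → z ^ n = c ^ 4 + 1 → c = 0)
    (k : ℕ) (b : Fin k → ℤ) (hb : Function.Injective b)
    (hpow : ∀ i, ∃ (a : ℤ) (m : ℕ), 2 ≤ m ∧ a ^ m = b i)
    (g f : ℤ → ℤ)
    (hg : ∀ x, g x = (∏ i, (x - b i)) ^ 4 + 1)
    (hf : ∀ x, f x = g x * ((x - 1) * g x + 1)) :
    ∀ x : ℤ, (∃ (y : ℤ) (n : ℕ), 2 ≤ n ∧ y ^ n = f x) ↔ ∃ i, x = b i := by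
  intro x
  constructor
  · rintro ⟨y, n, hn, hyn⟩
    set P := ∏ i, (x - b i) with hP
    have hgx : g x = P ^ 4 + 1 := hg x
    have hgpos : 0 < g x := by
      rw [hgx]; positivity
    have hcop : IsCoprime (g x) ((x - 1) * g x + 1) := ⟨-(x - 1), 1, by ring⟩
    have hmul : g x * ((x - 1) * g x + 1) = y ^ n := by rw [← hf x, hyn]
    obtain ⟨d, u, hd⟩ := exists_associated_pow_of_mul_eq_pow' hcop hmul
    have hP0 : P = 0 := by
      rcases Int.isUnit_iff.mp u.isUnit with h1 | h1
      · apply mihailescu d P n hn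
        rw [← hgx, ← hd, h1, mul_one]
      · rcases Nat.even_or_odd n with he | ho
        · exfalso
          have : g x = -(d ^ n) := by rw [← hd, h1]; ring
          have h2 : (0:ℤ) ≤ d ^ n := he.pow_nonneg d
          omega
        · apply mihailescu (-d) P n hn
          rw [ho.neg_pow, ← hgx, ← hd, h1]; ring
    obtain ⟨i, _, hi⟩ := Finset.prod_eq_zero_iff.mp hP0
    exact ⟨i, by omega⟩
  · rintro ⟨i, rfl⟩
    obtain ⟨a, m, hm, ham⟩ := hpow i
    have hP0 : (∏ j, (b i - b j)) = 0 :=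
      Finset.prod_eq_zero (Finset.mem_univ i) (by ring)
    refine ⟨a, m, hm, ?_⟩
    rw [ham, hf, hg, hP0]; ring
end

section
/- Fix an integer m ≥ 3 and suppose that every integer solution (x_1, x_2, x_3) of 3x_1^m + x_2^m = x_3^m has x_1 = 0. Let a_1, ..., a_k be distinct integers and define f(x) = 3((x-a_1)⋯(x-a_k))^m + x^m. Then for an integer x, f(x) is an m-th power of an integer if and only if x ∈ {a_1, ..., a_k}, and in that case f(a_i) = a_i^m. -/
theorem stmt_14 (m : ℕ) (hm : 3 ≤ m)
    (fermat : ∀ x₁ x₂ x₃ : ℤ, 3 * x₁ ^ m + x₂ ^ m = x₃ ^ m → x₁ = 0)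
    (k : ℕ) (a : Fin k → ℤ) (ha : Function.Injective a)
    (f : ℤ → ℤ) (hf : ∀ x, f x = 3 * (∏ i, (x - a i)) ^ m + x ^ m) :
    (∀ x : ℤ, (∃ y : ℤ, y ^ m = f x) ↔ ∃ i, x = a i) ∧
      ∀ i, f (a i) = (a i) ^ m := by
  have key : ∀ i, f (a i) = (a i) ^ m := by
    intro i
    rw [hf]
    have : (∏ j, (a i - a j)) = 0 :=
      Finset.prod_eq_zero (Finset.mem_univ i) (by ring)
    rw [this]
    have hm0 : m ≠ 0 := by omega
    simp [zero_pow hm0]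
  refine ⟨fun x => ⟨fun ⟨y, hy⟩ => ?_, fun ⟨i, hi⟩ => ?_⟩, key⟩
  · rw [hf] at hy
    have := fermat (∏ i, (x - a i)) x y hy.symm
    rcases Finset.prod_eq_zero_iff.mp this with ⟨i, -, hi⟩
    exact ⟨i, by linarith⟩
  · exact ⟨x, by rw [hi, key]⟩
end

section
/- The hyperelliptic-type curve y^2 = 1 - 3x^4 has exactly two rational points, namely (0, 1) and (0, -1). -/
/-!
Writing `x = p / q` in lowest terms, a rational point gives an integer solution of
`r ^ 2 = q ^ 4 - 3 * p ^ 4` with `p` and `q` coprime, and we show `p = 0` by descent on `q`.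
If `p ≠ 0`, then `p` is even (mod `8`) and `q` is prime to `6`. Splitting
`q ^ 4 - r ^ 2 = 3 * p ^ 4` into the coprime factors `(q ^ 2 ∓ r) / 2` gives
`c ^ 4 + 12 * d ^ 4 = q ^ 2`; splitting `q ^ 2 - c ^ 4 = 12 * d ^ 4` into `(q ∓ c ^ 2) / 2`
gives a new solution `c ^ 2 = f ^ 4 - 3 * e ^ 4` with `e ≠ 0` and `f ^ 4 < q`. At each split
the other placement of the factor `3` is ruled out modulo `4` and modulo `3` respectively.
-/

namespace Int

theorem exists_natCast_pow_eq_of_mul_eq_pow {a b c : ℤ} (ha : 0 ≤ a) (hab : IsCoprime a b)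
    {k : ℕ} (h : a * b = c ^ k) : ∃ d : ℕ, a = d ^ k := by
  obtain ⟨d, hd⟩ := exists_associated_pow_of_mul_eq_pow' hab h
  refine ⟨d.natAbs, ?_⟩
  rw [← Int.natAbs_of_nonneg ha, ← Int.associated_iff_natAbs.mp hd, Int.natAbs_pow,
    Nat.cast_pow]

theorem exists_eq_mul_pow_of_mul_eq_mul_pow {u v k l s : ℤ} (hu : 0 ≤ u) (hv : 0 ≤ v)
    (hk : 0 < k) (hl : 0 < l) (huv : IsCoprime u v) (hku : k ∣ u) (hlv : l ∣ v) {n : ℕ}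
    (h : u * v = k * l * s ^ n) : ∃ a b : ℕ, u = k * a ^ n ∧ v = l * b ^ n := by
  obtain ⟨u', rfl⟩ := hku
  obtain ⟨v', rfl⟩ := hlv
  have h' : u' * v' = s ^ n :=
    mul_left_cancel₀ (by positivity : k * l ≠ 0) (by linear_combination h)
  have hco : IsCoprime u' v' := huv.of_mul_left_right.of_mul_right_right
  obtain ⟨a, rfl⟩ :=
    exists_natCast_pow_eq_of_mul_eq_pow (nonneg_of_mul_nonneg_right hu hk) hco h'
  obtain ⟨b, rfl⟩ := exists_natCast_pow_eq_of_mul_eq_pow (nonneg_of_mul_nonneg_right hv hl)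
    hco.symm (by rw [mul_comm, h'])
  exact ⟨a, b, rfl, rfl⟩

theorem exists_isCoprime_add_eq_sub_eq {X Y : ℤ} (hXY : IsCoprime X Y) (hpar : Even (X - Y))
    (hlt : |Y| < X) :
    ∃ u v : ℤ, 0 < u ∧ 0 < v ∧ IsCoprime u v ∧ u + v = X ∧ v - u = Y := by
  obtain ⟨u, hu⟩ := hpar
  obtain ⟨hY₁, hY₂⟩ := abs_lt.mp hlt
  obtain ⟨a, b, hab⟩ := hXY
  refine ⟨u, X - u, by linarith, by linarith, ?_, by ring, by linarith⟩
  exact ⟨a - b, a + b, by linear_combination hab + b * hu⟩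

end Int

section

variable {p q r : ℤ}

theorem even_of_sq_eq_pow_four_sub_three_mul_pow_four (h : r ^ 2 = q ^ 4 - 3 * p ^ 4) : Even p := by
  by_contra hp
  obtain ⟨k, rfl⟩ := Int.not_even_iff_odd.mp hp
  have key : ∀ q k r : ZMod 8, r ^ 2 ≠ q ^ 4 - 3 * (2 * k + 1) ^ 4 := by decide
  exact key q k r (by exact_mod_cast congrArg (Int.cast : ℤ → ZMod 8) h)

theorem odd_of_sq_eq_pow_four_sub_three_mul_pow_four (hpq : IsCoprime p q)
    (h : r ^ 2 = q ^ 4 - 3 * p ^ 4) : Odd q := by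
  obtain ⟨s, rfl⟩ := even_iff_two_dvd.mp (even_of_sq_eq_pow_four_sub_three_mul_pow_four h)
  exact Int.isCoprime_two_left.mp hpq.of_mul_left_left

theorem not_three_dvd_of_sq_eq_pow_four_sub_three_mul_pow_four (hpq : IsCoprime p q)
    (h : r ^ 2 = q ^ 4 - 3 * p ^ 4) : ¬ 3 ∣ q := by
  rintro ⟨q, rfl⟩
  obtain ⟨r, rfl⟩ : 3 ∣ r :=
    Int.prime_three.dvd_of_dvd_pow (n := 2) ⟨27 * q ^ 4 - p ^ 4, by rw [h]; ring⟩
  have hp : 3 ∣ p := Int.prime_three.dvd_of_dvd_pow (n := 4) ⟨9 * q ^ 4 - r ^ 2, by linarith⟩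
  exact Int.prime_three.not_isUnit (hpq.isUnit_of_dvd' hp (dvd_mul_right 3 q))

theorem exists_pow_four_add_twelve_mul_pow_four_eq_sq_of_mul_eq {u v s : ℤ} (hu : 0 < u)
    (hv : 0 < v) (huv : IsCoprime u v) (hsum : u + v = q ^ 2) (hprod : u * v = 12 * s ^ 4) :
    ∃ c d : ℤ, d ≠ 0 ∧ IsCoprime c d ∧ c ^ 4 + 12 * d ^ 4 = q ^ 2 := by
  wlog hv2 : Odd v generalizing u v
  · refine this hv hu huv.symm (by rw [add_comm, hsum]) (by rw [mul_comm, hprod]) ?_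
    by_contra hu2
    exact Int.prime_two.not_isUnit <| huv.isUnit_of_dvd'
      (even_iff_two_dvd.mp (Int.not_odd_iff_even.mp hu2))
      (even_iff_two_dvd.mp (Int.not_odd_iff_even.mp hv2))
  have h4u : 4 ∣ u := ((Int.isCoprime_two_left.mpr hv2).pow_left (m := 2)).dvd_of_dvd_mul_right
    ⟨3 * s ^ 4, by rw [hprod]; ring⟩
  rcases Int.prime_three.dvd_mul.mp ⟨4 * s ^ 4, by rw [hprod]; ring⟩ with h3u | h3v
  · obtain ⟨a, b, rfl, rfl⟩ :=
      Int.exists_eq_mul_pow_of_mul_eq_mul_pow (k := 12) (l := 1) (n := 4)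
      hu.le hv.le (by norm_num) one_pos huv
      ((show IsCoprime (4 : ℤ) 3 from ⟨1, -1, by norm_num⟩).mul_dvd h4u h3u) (one_dvd _)
      (by rw [hprod]; ring)
    rw [one_mul] at huv hsum
    refine ⟨b, a, ?_, (IsCoprime.pow_iff four_pos four_pos).mp huv.of_mul_left_right.symm,
      by linear_combination hsum⟩
    rintro ha
    simp [ha] at hu
  · obtain ⟨a, b, rfl, rfl⟩ :=
      Int.exists_eq_mul_pow_of_mul_eq_mul_pow (k := 4) (l := 3) (n := 4)
      hu.le hv.le (by norm_num) (by norm_num) huv h4u h3v (by rw [hprod]; ring)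
    obtain ⟨k, hk⟩ := (Int.odd_pow' four_ne_zero).mp (Int.odd_mul.mp hv2).2
    rw [hk] at hsum
    have key : ∀ a k q : ZMod 4, q ^ 2 ≠ 4 * a ^ 4 + 3 * (2 * k + 1) ^ 4 := by decide
    exact absurd (by exact_mod_cast congrArg (Int.cast : ℤ → ZMod 4) hsum.symm) (key a k q)

theorem exists_pow_four_add_twelve_mul_pow_four_eq_sq (hp : p ≠ 0) (hpq : IsCoprime p q)
    (h : r ^ 2 = q ^ 4 - 3 * p ^ 4) :
    ∃ c d : ℤ, d ≠ 0 ∧ IsCoprime c d ∧ c ^ 4 + 12 * d ^ 4 = q ^ 2 := by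
  have hq : Odd q := odd_of_sq_eq_pow_four_sub_three_mul_pow_four hpq h
  have hq3 : IsCoprime 3 q := (Prime.coprime_iff_not_dvd Int.prime_three).mpr
    (not_three_dvd_of_sq_eq_pow_four_sub_three_mul_pow_four hpq h)
  have hqr : IsCoprime (q ^ 2) r := by
    have : IsCoprime q (r ^ 2) := by
      rw [h, show q ^ 4 - 3 * p ^ 4 = -(3 * p ^ 4) + q * q ^ 3 by ring,
        IsCoprime.add_mul_left_right_iff, IsCoprime.neg_right_iff]
      exact hq3.symm.mul_right hpq.symm.pow_right
    exact (IsCoprime.pow_right_iff two_pos).mp this |>.pow_left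
  have hlt : |r| < q ^ 2 := by
    refine abs_lt_of_sq_lt_sq ?_ (sq_nonneg q)
    have : 0 < p ^ 4 := by positivity
    rw [h]
    linarith
  obtain ⟨s, rfl⟩ := even_iff_two_dvd.mp (even_of_sq_eq_pow_four_sub_three_mul_pow_four h)
  have hr : Odd r :=
    (Int.odd_pow' two_ne_zero).mp (by rw [h]; exact hq.pow.sub_even ⟨24 * s ^ 4, by ring⟩)
  obtain ⟨u, v, hu, hv, huv, hsum, hdiff⟩ :=
    Int.exists_isCoprime_add_eq_sub_eq hqr (hq.pow.sub_odd hr) hlt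
  have hprod : u * v = 12 * s ^ 4 := mul_left_cancel₀ (show (4 : ℤ) ≠ 0 by norm_num)
    (by linear_combination (u + v + q ^ 2) * hsum - (v - u + r) * hdiff - h)
  exact exists_pow_four_add_twelve_mul_pow_four_eq_sq_of_mul_eq hu hv huv hsum hprod

theorem exists_sq_eq_pow_four_sub_three_mul_pow_four_of_mul_eq {m n c d : ℤ} (hm : 0 < m)
    (hn : 0 < n) (hmn : IsCoprime m n) (hdiff : n - m = c ^ 2) (hprod : m * n = 3 * d ^ 4) :
    ∃ (f : ℕ) (e : ℤ),
      n = f ^ 4 ∧ e ≠ 0 ∧ IsCoprime e f ∧ c ^ 2 = f ^ 4 - 3 * e ^ 4 := by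
  rcases Int.prime_three.dvd_mul.mp ⟨d ^ 4, hprod⟩ with h3m | h3n
  · obtain ⟨e, f, rfl, rfl⟩ :=
      Int.exists_eq_mul_pow_of_mul_eq_mul_pow (k := 3) (l := 1) (n := 4)
      hm.le hn.le (by norm_num) one_pos hmn h3m (one_dvd _) (by rw [hprod]; ring)
    rw [one_mul] at hmn hdiff ⊢
    refine ⟨f, e, rfl, ?_, (IsCoprime.pow_iff four_pos four_pos).mp hmn.of_mul_left_right,
      by linear_combination -hdiff⟩
    rintro he
    simp [he] at hm
  · obtain ⟨e, f, rfl, rfl⟩ :=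
      Int.exists_eq_mul_pow_of_mul_eq_mul_pow (k := 1) (l := 3) (n := 4)
      hm.le hn.le one_pos (by norm_num) hmn (one_dvd _) h3n (by rw [hprod]; ring)
    rw [one_mul] at hmn hdiff
    have he : ((e : ℤ) : ZMod 3) ≠ 0 := by
      rw [Ne, ZMod.intCast_zmod_eq_zero_iff_dvd, Nat.cast_ofNat,
        ← Prime.coprime_iff_not_dvd Int.prime_three]
      exact ((IsCoprime.pow_left_iff four_pos).mp hmn.of_mul_right_left).symm
    have key : ∀ c e f : ZMod 3, e ≠ 0 → c ^ 2 ≠ 3 * f ^ 4 - e ^ 4 := by decide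
    exact absurd (by exact_mod_cast congrArg (Int.cast : ℤ → ZMod 3) hdiff.symm) (key c e f he)

theorem exists_smaller_sq_eq_pow_four_sub_three_mul_pow_four {c d : ℤ} (hq : 0 ≤ q)
    (hq2 : Odd q) (hq3 : ¬ 3 ∣ q) (hd : d ≠ 0) (hcd : IsCoprime c d)
    (h : c ^ 4 + 12 * d ^ 4 = q ^ 2) :
    ∃ (f : ℕ) (e c' : ℤ),
      (f : ℤ) < q ∧ e ≠ 0 ∧ IsCoprime e f ∧ c' ^ 2 = f ^ 4 - 3 * e ^ 4 := by
  have hqd : IsCoprime q d := by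
    refine (IsCoprime.pow_left_iff two_pos).mp ?_
    rw [← h, show c ^ 4 + 12 * d ^ 4 = c ^ 4 + d * (12 * d ^ 3) by ring,
      IsCoprime.add_mul_left_left_iff]
    exact hcd.pow_left
  have hqc : IsCoprime q (c ^ 2) := by
    refine (IsCoprime.pow_right_iff two_pos).mp ?_
    rw [show (c ^ 2) ^ 2 = -(2 ^ 2 * 3 * d ^ 4) + q * q by linear_combination h,
      IsCoprime.add_mul_left_right_iff, IsCoprime.neg_right_iff]
    exact ((Int.isCoprime_two_right.mpr hq2).pow_right.mul_right
      ((Prime.coprime_iff_not_dvd Int.prime_three).mpr hq3).symm).mul_right hqd.pow_right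
  have hc : Odd (c ^ 2) := (Int.odd_pow' two_ne_zero).mp
    (by rw [show (c ^ 2) ^ 2 = q ^ 2 - 12 * d ^ 4 by linear_combination h]
        exact hq2.pow.sub_even ⟨6 * d ^ 4, by ring⟩)
  have hlt : |c ^ 2| < q := by
    refine abs_lt_of_sq_lt_sq ?_ hq
    have : 0 < d ^ 4 := by positivity
    linarith
  obtain ⟨m, n, hm, hn, hmn, hsum, hdiff⟩ :=
    Int.exists_isCoprime_add_eq_sub_eq hqc (hq2.sub_odd hc) hlt
  have hprod : m * n = 3 * d ^ 4 := mul_left_cancel₀ (show (4 : ℤ) ≠ 0 by norm_num)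
    (by linear_combination (m + n + q) * hsum - (n - m + c ^ 2) * hdiff - h)
  obtain ⟨f, e, rfl, he, hef, h'⟩ :=
    exists_sq_eq_pow_four_sub_three_mul_pow_four_of_mul_eq hm hn hmn hdiff hprod
  have hf : (f : ℤ) ≤ f ^ 4 := by exact_mod_cast Nat.le_self_pow four_ne_zero f
  exact ⟨f, e, c, by linarith, he, hef, h'⟩

end

theorem eq_zero_of_sq_eq_pow_four_sub_three_mul_pow_four (q : ℕ) {p r : ℤ} (hpq : IsCoprime p q)
    (h : r ^ 2 = q ^ 4 - 3 * p ^ 4) : p = 0 := by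
  induction q using Nat.strong_induction_on generalizing p r with
  | _ q ih =>
  by_contra hp
  obtain ⟨c, d, hd, hcd, hcdq⟩ := exists_pow_four_add_twelve_mul_pow_four_eq_sq hp hpq h
  obtain ⟨f, e, c', hfq, he, hef, h'⟩ := exists_smaller_sq_eq_pow_four_sub_three_mul_pow_four
    q.cast_nonneg (odd_of_sq_eq_pow_four_sub_three_mul_pow_four hpq h)
    (not_three_dvd_of_sq_eq_pow_four_sub_three_mul_pow_four hpq h) hd hcd hcdq
  exact he (ih f (by exact_mod_cast hfq) hef h')

theorem Rat.eq_zero_of_sq_eq_one_sub_three_mul_pow_four {x y : ℚ} (h : y ^ 2 = 1 - 3 * x ^ 4) :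
    x = 0 := by
  have : IsSquare (((x.den : ℤ) ^ 4 - 3 * x.num ^ 4 : ℤ) : ℚ) := by
    refine ⟨y * x.den ^ 2, ?_⟩
    push_cast
    rw [← x.mul_den_eq_num]
    linear_combination (-(x.den : ℚ) ^ 4) * h
  obtain ⟨r, hr⟩ := Rat.isSquare_intCast_iff.mp this
  exact Rat.num_eq_zero.mp <| eq_zero_of_sq_eq_pow_four_sub_three_mul_pow_four x.den
    (Int.isCoprime_iff_gcd_eq_one.mpr x.reduced) (by rw [hr]; ring)

theorem stmt_17 :
    {p : ℚ × ℚ | p.2 ^ 2 = 1 - 3 * p.1 ^ 4} = {(0, 1), (0, -1)} := by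
  ext ⟨x, y⟩
  simp only [Set.mem_ofPred_eq, Set.mem_insert_iff, Set.mem_singleton_iff, Prod.mk.injEq]
  constructor
  · intro h
    obtain rfl := Rat.eq_zero_of_sq_eq_one_sub_three_mul_pow_four h
    have hy : y ^ 2 = 1 ^ 2 := by linear_combination h
    rcases sq_eq_sq_iff_eq_or_eq_neg.mp hy with rfl | rfl <;> simp
  · rintro (⟨rfl, rfl⟩ | ⟨rfl, rfl⟩) <;> norm_num
end

section
/- For any finite set S = {a_1^m, ..., a_k^m} of distinct m-th powers of integers (m ≥ 2 fixed), the polynomial f_S(x) = (x(x^2+1)g(x))^{4m} + (x^{2m}-x^2+2)g(x)^{2m} + x^m, where g(x) = (x-a_1)⋯(x-a_k), satisfies f_S(ℤ) ∩ P_m = S, where P_m is the set of m-th powers of integers. -/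
lemma aux_two_mul (m : ℕ) (hm : 2 ≤ m) (d b : ℤ) (hd : d ≠ 0) : b ^ m ≠ 2 * d ^ m := by
  intro h
  have hD : d.natAbs ≠ 0 := Int.natAbs_ne_zero.mpr hd
  have hN : b.natAbs ^ m = 2 * d.natAbs ^ m := by
    have := congrArg Int.natAbs h
    simpa [Int.natAbs_pow, Int.natAbs_mul] using this
  have hB : b.natAbs ≠ 0 := by
    intro h0
    rw [h0] at hN
    have : (0:ℕ) ^ m = 0 := zero_pow (by omega)
    rw [this] at hN
    have : d.natAbs ^ m ≠ 0 := pow_ne_zero m hD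
    omega
  have := congrArg (fun n => n.factorization 2) hN
  simp only [Nat.factorization_pow, Nat.factorization_mul (by norm_num : (2:ℕ) ≠ 0)
    (pow_ne_zero m hD), Finsupp.smul_apply, Finsupp.add_apply, Nat.Prime.factorization_self
    Nat.prime_two, smul_eq_mul] at this
  -- this : m * b.natAbs.factorization 2 = 1 + m * d.natAbs.factorization 2
  have hdvd : m ∣ 1 := by
    have h1 : m ∣ m * (b.natAbs.factorization 2) := dvd_mul_right _ _
    rw [this] at h1
    exact (Nat.dvd_add_right (dvd_mul_right m _)).mp (by rwa [add_comm] at h1)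
  have := Nat.le_of_dvd one_pos hdvd
  omega

lemma aux_sandwich (m : ℕ) (hm : 2 ≤ m) (x g b : ℤ) (hx : x ≠ 0) (hg : g ≠ 0) :
    b ^ m ≠ (x * (x ^ 2 + 1) * g) ^ (4 * m)
      + (x ^ (2 * m) - x ^ 2 + 2) * g ^ (2 * m) + x ^ m := by
  obtain ⟨A, hA⟩ : ∃ A : ℤ, A = x * (x ^ 2 + 1) * g := ⟨_, rfl⟩
  rw [← hA]
  intro heq
  obtain ⟨B, hBdef⟩ : ∃ B : ℤ, B = A ^ 4 := ⟨_, rfl⟩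
  have hAne : A ≠ 0 := by
    rw [hA]
    apply mul_ne_zero (mul_ne_zero hx _) hg
    positivity
  have hB1 : 1 ≤ B := by
    have : 0 < A ^ 4 := by positivity
    omega
  have hx2 : 1 ≤ x ^ 2 := by
    have : 0 < x ^ 2 := by positivity
    omega
  have hg2 : 1 ≤ g ^ 2 := by
    have : 0 < g ^ 2 := by positivity
    omega
  have habs : 1 ≤ |x| := Int.one_le_abs hx
  have hgabs : 1 ≤ |g| := Int.one_le_abs hg
  have hmne : m ≠ 0 := by omega
  -- basic rewrites
  have hx2m : x ^ (2 * m) = (x ^ 2) ^ m := pow_mul x 2 m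
  have hg2m : g ^ (2 * m) = (g ^ 2) ^ m := pow_mul g 2 m
  have hG1 : 1 ≤ (g ^ 2) ^ m := one_le_pow₀ hg2
  have hc2 : 2 ≤ x ^ (2 * m) - x ^ 2 + 2 := by
    have := le_self_pow₀ hx2 hmne
    rw [hx2m]; linarith
  have hv1 : 1 ≤ |x| ^ m := one_le_pow₀ habs
  have habs_pow : |x| ^ m = |x ^ m| := (abs_pow x m).symm
  have hxm_le : x ^ m ≤ |x| ^ m := by rw [habs_pow]; exact le_abs_self _
  have hxm_ge : -(|x| ^ m) ≤ x ^ m := by rw [habs_pow]; exact neg_abs_le _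
  have hx2_le_vm : x ^ 2 ≤ |x| ^ m := by
    calc x ^ 2 = |x| ^ 2 := (sq_abs x).symm
    _ ≤ |x| ^ m := pow_le_pow_right₀ habs (by omega)
  have hx2m_ge : x ^ 2 * |x| ^ m ≤ x ^ (2 * m) := by
    have h1 : x ^ (2 * m) = |x| ^ m * |x| ^ m := by
      rw [hx2m, ← sq_abs, ← pow_mul, two_mul, pow_add]
    rw [h1]
    exact mul_le_mul_of_nonneg_right hx2_le_vm (by positivity)
  -- lower bound : 0 < L
  have hLpos : 0 < (x ^ (2 * m) - x ^ 2 + 2) * g ^ (2 * m) + x ^ m := by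
    rw [hg2m]
    nlinarith [mul_nonneg (by linarith : (0:ℤ) ≤ x ^ 2 - 1) (by linarith : (0:ℤ) ≤ |x| ^ m - 1),
      mul_nonneg (by linarith : (0:ℤ) ≤ x ^ (2*m) - x ^ 2 + 2 - 2) (by linarith : (0:ℤ) ≤ (g ^ 2) ^ m - 1)]
  -- upper bound : L ≤ 2 * B^(m-1)
  have hA2eq : A ^ 2 = x ^ 2 * (x ^ 2 + 1) ^ 2 * g ^ 2 := by rw [hA]; ring
  have hA2_1 : 1 ≤ A ^ 2 := by
    have : 0 < A ^ 2 := by positivity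
    omega
  have hBm : B ^ m = A ^ (4 * m) := by rw [hBdef, ← pow_mul]
  have hBm1 : B ^ (m - 1) = (A ^ 2) ^ (2 * m - 2) := by
    rw [hBdef, ← pow_mul, ← pow_mul]
    congr 1
    omega
  -- piece 1 : x^m ≤ (A^2)^(2m-2)
  have hx2_le_A2 : x ^ 2 ≤ A ^ 2 := by
    have h4 : 1 ≤ (x ^ 2 + 1) ^ 2 * g ^ 2 := by nlinarith
    calc x ^ 2 = x ^ 2 * 1 := by ring
    _ ≤ x ^ 2 * ((x ^ 2 + 1) ^ 2 * g ^ 2) := by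
        apply mul_le_mul_of_nonneg_left h4 (by positivity)
    _ = A ^ 2 := by rw [hA2eq]; ring
  have piece1 : x ^ m ≤ (A ^ 2) ^ (2 * m - 2) := by
    calc x ^ m ≤ |x| ^ m := hxm_le
    _ ≤ |x| ^ (2 * (2 * m - 2)) := pow_le_pow_right₀ habs (by omega)
    _ = (x ^ 2) ^ (2 * m - 2) := by rw [pow_mul, sq_abs]
    _ ≤ (A ^ 2) ^ (2 * m - 2) := pow_le_pow_left₀ (by positivity) hx2_le_A2 _
  -- piece 2 : coefficient * g^(2m) ≤ (A^2)^(2m-2)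
  have piece2 : (x ^ (2 * m) - x ^ 2 + 2) * g ^ (2 * m) ≤ (A ^ 2) ^ (2 * m - 2) := by
    set s : ℤ := x ^ 2 with hs
    have hst : s ^ m < (s + 1) ^ m := pow_lt_pow_left₀ (lt_add_one s) (by positivity) hmne
    have ht2 : 2 ≤ s + 1 := by omega
    have hcle : x ^ (2 * m) - x ^ 2 + 2 ≤ (s + 1) ^ (m + 1) := by
      have h5 : (s + 1) ^ (m + 1) = (s + 1) ^ m * (s + 1) := by rw [pow_succ]
      have h6 : (s ^ m + 1) * 2 ≤ (s + 1) ^ m * (s + 1) := by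
        apply mul_le_mul (by omega) ht2 (by norm_num) (by positivity)
      rw [hx2m, h5]
      nlinarith
    have hcle2 : (s + 1) ^ (m + 1) ≤ (s + 1) ^ (2 * (2 * m - 2)) :=
      pow_le_pow_right₀ (by omega) (by omega)
    have hgle : g ^ (2 * m) ≤ (g ^ 2) ^ (2 * m - 2) := by
      rw [hg2m]
      exact pow_le_pow_right₀ hg2 (by omega)
    have hmain : (x ^ (2 * m) - x ^ 2 + 2) * g ^ (2 * m)
        ≤ (s + 1) ^ (2 * (2 * m - 2)) * (g ^ 2) ^ (2 * m - 2) := by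
      apply mul_le_mul (le_trans hcle hcle2) hgle (by rw [hg2m]; positivity) (by positivity)
    have hA2exp : (A ^ 2) ^ (2 * m - 2)
        = (x ^ 2) ^ (2 * m - 2) * ((s + 1) ^ (2 * (2 * m - 2)) * (g ^ 2) ^ (2 * m - 2)) := by
      rw [hA2eq, mul_pow, mul_pow, pow_mul]
      ring
    rw [hA2exp]
    have hone : 1 ≤ (x ^ 2) ^ (2 * m - 2) := one_le_pow₀ hx2
    have hT : (0:ℤ) ≤ (s + 1) ^ (2 * (2 * m - 2)) * (g ^ 2) ^ (2 * m - 2) := by positivity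
    calc (x ^ (2 * m) - x ^ 2 + 2) * g ^ (2 * m)
        ≤ (s + 1) ^ (2 * (2 * m - 2)) * (g ^ 2) ^ (2 * m - 2) := hmain
    _ = 1 * ((s + 1) ^ (2 * (2 * m - 2)) * (g ^ 2) ^ (2 * m - 2)) := by ring
    _ ≤ (x ^ 2) ^ (2 * m - 2) * ((s + 1) ^ (2 * (2 * m - 2)) * (g ^ 2) ^ (2 * m - 2)) :=
        mul_le_mul_of_nonneg_right hone hT
  -- combine
  have hLle : (x ^ (2 * m) - x ^ 2 + 2) * g ^ (2 * m) + x ^ m ≤ 2 * B ^ (m - 1) := by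
    rw [hBm1]; linarith
  have hBsucc : B ^ m + 2 * B ^ (m - 1) < (B + 1) ^ m := by
    have hsplit : (B + 1) ^ m = (B + 1) ^ 2 * (B + 1) ^ (m - 2) := by
      rw [← pow_add]; congr 1; omega
    have h7 : B ^ (m - 2) ≤ (B + 1) ^ (m - 2) := pow_le_pow_left₀ (by omega) (by omega) _
    have h8 : 1 ≤ B ^ (m - 2) := one_le_pow₀ hB1
    have h9 : B ^ m = B ^ 2 * B ^ (m - 2) := by rw [← pow_add]; congr 1; omega
    have h10 : B ^ (m - 1) = B * B ^ (m - 2) := by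
      rw [← pow_succ']; congr 1; omega
    have key : (B + 1) ^ 2 * B ^ (m - 2) ≤ (B + 1) ^ 2 * (B + 1) ^ (m - 2) :=
      mul_le_mul_of_nonneg_left h7 (by positivity)
    have expand : (B + 1) ^ 2 * B ^ (m - 2)
        = B ^ 2 * B ^ (m - 2) + 2 * (B * B ^ (m - 2)) + B ^ (m - 2) := by ring
    rw [hsplit, h9, h10]
    linarith [key, h8, expand]
  have hlow : B ^ m < b ^ m := by rw [heq, ← hBm]; linarith
  have hhigh : b ^ m < (B + 1) ^ m := by
    rw [heq, ← hBm]
    linarith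
  have hbm_pos : 0 < b ^ m := lt_of_le_of_lt (by positivity) hlow
  have hcb : |b| ^ m = b ^ m := by
    rw [← abs_pow, abs_of_pos hbm_pos]
  have h5 : B < |b| := by
    by_contra hle
    push_neg at hle
    have := pow_le_pow_left₀ (abs_nonneg b) hle m
    rw [hcb] at this
    linarith
  have h6 : |b| < B + 1 := by
    by_contra hle
    push_neg at hle
    have := pow_le_pow_left₀ (by omega : (0:ℤ) ≤ B + 1) hle m
    rw [hcb] at this
    linarith
  omega

theorem stmt_18 (m : ℕ) (hm : 2 ≤ m) (k : ℕ) (a : Fin k → ℤ)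
    (ha : Function.Injective a)
    (f : ℤ → ℤ)
    (hf : ∀ x : ℤ, f x = (x * (x ^ 2 + 1) * ∏ i, (x - a i)) ^ (4 * m)
      + (x ^ (2 * m) - x ^ 2 + 2) * (∏ i, (x - a i)) ^ (2 * m) + x ^ m) :
    Set.range f ∩ {y : ℤ | ∃ b : ℤ, b ^ m = y}
      = Set.range (fun i : Fin k => a i ^ m) := by
  have hmne : m ≠ 0 := by omega
  have hfa : ∀ i : Fin k, f (a i) = a i ^ m := by
    intro i
    have hz : (∏ j, (a i - a j)) = 0 :=
      Finset.prod_eq_zero (Finset.mem_univ i) (sub_self _)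
    rw [hf, hz, zero_pow (by omega : 2 * m ≠ 0), mul_zero,
      mul_zero, zero_pow (by omega : 4 * m ≠ 0)]
    ring
  ext y
  simp only [Set.mem_inter_iff, Set.mem_range, Set.mem_setOf_eq]
  constructor
  · rintro ⟨⟨x, rfl⟩, b, hb⟩
    by_cases hex : ∃ i, x = a i
    · obtain ⟨i, rfl⟩ := hex
      exact ⟨i, (hfa i).symm⟩
    · push_neg at hex
      exfalso
      have hg : (∏ i, (x - a i)) ≠ 0 := by
        apply Finset.prod_ne_zero_iff.mpr
        intro i _
        exact sub_ne_zero_of_ne (hex i)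
      by_cases hx0 : x = 0
      · subst hx0
        rw [hf] at hb
        have hb' : b ^ m = 2 * ((∏ i, (0 - a i)) ^ 2) ^ m := by
          have e1 : (0:ℤ) * (0 ^ 2 + 1) * ∏ i, (0 - a i) = 0 := by ring
          rw [hb, e1, zero_pow (by omega : 4 * m ≠ 0), zero_pow (by omega : 2 * m ≠ 0),
            zero_pow (by norm_num : 2 ≠ 0), zero_pow hmne, ← pow_mul]
          ring
        exact aux_two_mul m hm _ b (pow_ne_zero 2 hg) hb'
      · rw [hf] at hb
        exact aux_sandwich m hm x (∏ i, (x - a i)) b hx0 hg hb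
  · rintro ⟨i, rfl⟩
    exact ⟨⟨a i, hfa i⟩, a i, rfl⟩
end
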